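/- arXiv:1812.07082 — 2 statements merged into one kernel-verified Lean document; each statement's English description precedes it below -/
import Mathlib

section
/- If a binary BCH code of length n = 2^m - 1 has designed correction capability t with t ≤ 2^{⌈m/2⌉-1}, then the minimal polynomials μ₁(x), μ₃(x), ..., μ_{2t-1}(x) are pairwise distinct and each has degree exactly m, so the generator polynomial g(x) = μ₁(x)μ₃(x)···μ_{2t-1}(x) has degree n - k = mt. -/
/-!
The roots of `minpoly (ZMod 2) (α ^ a)` are the conjugates `α ^ (a * 2 ^ k)`, `k < m`. Hence two
such minimal polynomials for exponents `a` and `b` agree only if `b ≡ a * 2 ^ k [MOD 2 ^ m - 1]`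
for some `k < m`, and the degree `d` of one of them satisfies `a * 2 ^ d ≡ a`. For odd
`a, b < 2 ^ ⌈m/2⌉` such a congruence forces `k = 0`: if `0 < k ≤ m - ⌈m/2⌉`, then
`a * 2 ^ k < 2 ^ m - 1` is even and cannot reduce to the odd `b`, and otherwise multiplying by
`2 ^ (m - k)` leads back to that case with `a` and `b` exchanged.
-/

open Polynomial IntermediateField

theorem Nat.not_modEq_mul_two_pow_of_le_sub {m c a b k : ℕ} (hb : Odd b) (ha : a < 2 ^ c)
    (hbc : b < 2 ^ c) (hk : 0 < k) (hkc : k ≤ m - c) : ¬b ≡ a * 2 ^ k [MOD 2 ^ m - 1] := by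
  intro h
  have hcm : c < m := by omega
  have hsplit : 2 ^ c * 2 ^ (m - c) = 2 ^ m := by rw [← pow_add, Nat.add_sub_cancel' hcm.le]
  have hmc : 2 ≤ 2 ^ (m - c) := Nat.le_self_pow (by omega) 2
  have hm : 2 ^ (m - c) ≤ 2 ^ m := Nat.pow_le_pow_right two_pos (Nat.sub_le m c)
  have hc : 2 ^ c * 2 ≤ 2 ^ m := by
    rw [← pow_succ]; exact Nat.pow_le_pow_right two_pos hcm
  have hlt : a * 2 ^ k < 2 ^ m - 1 :=
    calc a * 2 ^ k ≤ (2 ^ c - 1) * 2 ^ (m - c) :=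
          Nat.mul_le_mul (by omega) (Nat.pow_le_pow_right two_pos hkc)
      _ = 2 ^ m - 2 ^ (m - c) := by rw [Nat.sub_mul, one_mul, hsplit]
      _ < 2 ^ m - 1 := by omega
  have heq : b = a * 2 ^ k := h.eq_of_lt_of_lt (by omega) hlt
  have heven : Even (a * 2 ^ k) := (Nat.even_pow.2 ⟨even_two, hk.ne'⟩).mul_left a
  exact Nat.not_even_iff_odd.2 hb (heq ▸ heven)

theorem Nat.eq_of_odd_modEq_mul_two_pow {m c a b k : ℕ} (hc : 2 * c ≤ m + 1) (ha : Odd a)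
    (hb : Odd b) (hac : a < 2 ^ c) (hbc : b < 2 ^ c) (hk : k < m)
    (h : b ≡ a * 2 ^ k [MOD 2 ^ m - 1]) : k = 0 ∧ a = b := by
  rcases Nat.eq_zero_or_pos k with rfl | hk0
  · refine ⟨rfl, ?_⟩
    rw [pow_zero, mul_one] at h
    by_cases hcm : c < m
    · have : 2 ^ c * 2 ≤ 2 ^ m := by
        rw [← pow_succ]; exact Nat.pow_le_pow_right two_pos hcm
      exact (h.eq_of_lt_of_lt (by omega) (by omega)).symm
    · have : 2 ^ c ≤ 2 ^ 1 := Nat.pow_le_pow_right two_pos (by omega)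
      obtain ⟨i, rfl⟩ := ha
      obtain ⟨j, rfl⟩ := hb
      omega
  · refine absurd h fun h ↦ ?_
    by_cases hkc : k ≤ m - c
    · exact Nat.not_modEq_mul_two_pow_of_le_sub hb hac hbc hk0 hkc h
    · have hwrap : a * 2 ^ k * 2 ^ (m - k) ≡ a [MOD 2 ^ m - 1] := by
        rw [mul_assoc, ← pow_add, Nat.add_sub_cancel' hk.le]
        simpa using (Nat.modEq_sub Nat.one_le_two_pow).mul_left a
      exact Nat.not_modEq_mul_two_pow_of_le_sub ha hbc hac (by omega) (by omega)
        ((h.mul_right _).trans hwrap).symm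

section FiniteFieldExtension

variable {K L : Type*} [Field K] [Fintype K] [Field L] [Algebra K L] [Finite L]

theorem pow_card_pow_natDegree_minpoly (x : L) :
    x ^ Fintype.card K ^ (minpoly K x).natDegree = x := by
  have hx : IsIntegral K x := .of_finite K x
  have := Fintype.ofFinite K⟮x⟯
  have hcard : Fintype.card K⟮x⟯ = Fintype.card K ^ (minpoly K x).natDegree := by
    rw [Module.card_eq_pow_finrank (K := K), IntermediateField.adjoin.finrank hx]
  have := FiniteField.pow_card (⟨x, IntermediateField.mem_adjoin_simple_self K x⟩ : K⟮x⟯)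
  rw [hcard] at this
  exact congrArg Subtype.val this

theorem exists_pow_card_pow_eq_of_minpoly_eq {x y : L} (h : minpoly K x = minpoly K y) :
    ∃ k < Module.finrank K L, x ^ Fintype.card K ^ k = y := by
  obtain ⟨g, hg⟩ := (Normal.minpoly_eq_iff_mem_orbit L).1 h.symm
  obtain ⟨⟨k, hk⟩, rfl⟩ := (FiniteField.bijective_frobeniusAlgEquivOfAlgebraic_pow K L).2 g
  refine ⟨k, hk, ?_⟩
  simp only [← hg, AlgEquiv.smul_def, AlgEquiv.coe_pow]
  exact congrFun (FiniteField.coe_frobeniusAlgEquivOfAlgebraic_iterate K L k).symm x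

end FiniteFieldExtension

theorem ZMod.finrank_eq_of_card_eq_pow {p m : ℕ} [Fact p.Prime] {V : Type*} [AddCommGroup V]
    [Module (ZMod p) V] [Fintype V] (h : Fintype.card V = p ^ m) :
    Module.finrank (ZMod p) V = m :=
  Nat.pow_right_injective (Fact.out : p.Prime).two_le <| by
    show p ^ _ = p ^ m
    rw [← h, Module.card_eq_pow_finrank (K := ZMod p), ZMod.card]

theorem pow_modEq_of_orderOf_eq {F : Type*} [Field F] [Fintype F] {m k l : ℕ} {α : F}
    (hcard : Fintype.card F = 2 ^ m) (hα : orderOf α = 2 ^ m - 1) (h : α ^ k = α ^ l) :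
    k ≡ l [MOD 2 ^ m - 1] := by
  have hpos : 0 < orderOf α := by
    rw [hα, ← hcard]; exact Nat.sub_pos_of_lt Fintype.one_lt_card
  exact hα ▸ (orderOf_pos_iff.1 hpos).pow_eq_pow_iff_modEq.1 h

section BinaryField

variable {F : Type*} [Field F] [Fintype F] [Algebra (ZMod 2) F] {m c a b : ℕ} {α : F}

theorem natDegree_minpoly_pow (hcard : Fintype.card F = 2 ^ m) (hα : orderOf α = 2 ^ m - 1)
    (hc : 2 * c ≤ m + 1) (ha : Odd a) (hac : a < 2 ^ c) :
    (minpoly (ZMod 2) (α ^ a)).natDegree = m := by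
  have hpos : 0 < (minpoly (ZMod 2) (α ^ a)).natDegree :=
    minpoly.natDegree_pos (.of_finite _ _)
  have hle : (minpoly (ZMod 2) (α ^ a)).natDegree ≤ m := by
    rw [← ZMod.finrank_eq_of_card_eq_pow hcard]
    exact minpoly.natDegree_le _
  have hfix := pow_card_pow_natDegree_minpoly (K := ZMod 2) (α ^ a)
  rw [ZMod.card, ← pow_mul] at hfix
  by_contra hne
  have := Nat.eq_of_odd_modEq_mul_two_pow hc ha ha hac hac (lt_of_le_of_ne hle hne)
    (pow_modEq_of_orderOf_eq hcard hα hfix).symm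
  omega

theorem eq_of_minpoly_pow_eq (hcard : Fintype.card F = 2 ^ m) (hα : orderOf α = 2 ^ m - 1)
    (hc : 2 * c ≤ m + 1) (ha : Odd a) (hb : Odd b) (hac : a < 2 ^ c) (hbc : b < 2 ^ c)
    (h : minpoly (ZMod 2) (α ^ a) = minpoly (ZMod 2) (α ^ b)) : a = b := by
  obtain ⟨k, hk, hpow⟩ := exists_pow_card_pow_eq_of_minpoly_eq h
  rw [ZMod.card, ← pow_mul] at hpow
  rw [ZMod.finrank_eq_of_card_eq_pow hcard] at hk
  exact (Nat.eq_of_odd_modEq_mul_two_pow hc ha hb hac hbc hk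
    (pow_modEq_of_orderOf_eq hcard hα hpow).symm).2

end BinaryField

theorem stmt10_general (m t : ℕ) (hm : 0 < m)
    (hcond : t ≤ 2 ^ ((m + 1) / 2 - 1))
    (F : Type*) [Field F] [Fintype F] [Algebra (ZMod 2) F]
    (hcard : Fintype.card F = 2 ^ m)
    (α : F) (hα : orderOf α = 2 ^ m - 1)
    (μ : ℕ → Polynomial (ZMod 2)) (hμ : ∀ i, μ i = minpoly (ZMod 2) (α ^ i)) :
    (∀ i < t, ∀ j < t, i ≠ j → μ (2 * i + 1) ≠ μ (2 * j + 1)) ∧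
    (∀ i < t, (μ (2 * i + 1)).natDegree = m) ∧
    (∏ i ∈ Finset.range t, μ (2 * i + 1)).natDegree = m * t := by
  have hc : 2 * ((m + 1) / 2) ≤ m + 1 := Nat.mul_div_le (m + 1) 2
  have hodd (i : ℕ) : Odd (2 * i + 1) := odd_two_mul_add_one i
  have hlt {i : ℕ} (hi : i < t) : 2 * i + 1 < 2 ^ ((m + 1) / 2) := by
    have : 2 ^ ((m + 1) / 2 - 1) * 2 = 2 ^ ((m + 1) / 2) := by
      rw [← pow_succ, Nat.sub_add_cancel (by omega)]
    omega
  have hdeg (i : ℕ) (hi : i < t) : (μ (2 * i + 1)).natDegree = m :=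
    hμ _ ▸ natDegree_minpoly_pow hcard hα hc (hodd i) (hlt hi)
  refine ⟨fun i hi j hj hij h ↦ ?_, hdeg, ?_⟩
  · rw [hμ, hμ] at h
    have := eq_of_minpoly_pow_eq hcard hα hc (hodd i) (hodd j) (hlt hi) (hlt hj) h
    omega
  · rw [natDegree_prod _ _ fun i _ ↦ hμ _ ▸ minpoly.ne_zero (.of_finite _ _),
      Finset.sum_congr rfl fun i hi ↦ hdeg i (Finset.mem_range.1 hi), Finset.sum_const,
      Finset.card_range, smul_eq_mul, mul_comm]

/-- If a binary BCH code of length `n = 2^m - 1` has designed correction capability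
`t ≤ 2^{⌈m/2⌉-1}`, then the minimal polynomials `μ₁, μ₃, …, μ_{2t-1}` are pairwise
distinct and each has degree exactly `m`, so `g = μ₁ μ₃ ⋯ μ_{2t-1}` has degree `mt`. -/
theorem stmt10 (m t : ℕ) (hm : 0 < m) (ht : 0 < t)
    (hcond : t ≤ 2 ^ ((m + 1) / 2 - 1))
    (F : Type*) [Field F] [Fintype F] [Algebra (ZMod 2) F]
    (hcard : Fintype.card F = 2 ^ m)
    (α : F) (hα : orderOf α = 2 ^ m - 1)
    (μ : ℕ → Polynomial (ZMod 2)) (hμ : ∀ i, μ i = minpoly (ZMod 2) (α ^ i)) :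
    (∀ i < t, ∀ j < t, i ≠ j → μ (2 * i + 1) ≠ μ (2 * j + 1)) ∧
    (∀ i < t, (μ (2 * i + 1)).natDegree = m) ∧
    (∏ i ∈ Finset.range t, μ (2 * i + 1)).natDegree = m * t :=
  stmt10_general m t hm hcond F hcard α hα μ hμ
end

section
/- Reed–Solomon erasure-only decoding: let the generator be g(x) = (x-1)(x-β)···(x-β^{f-1}) over GF(q), and suppose e ≤ f erasures occur at known locators X₀, ..., X_{e-1} (distinct nonzero elements). Then the erasure values Y₀, ..., Y_{e-1} are uniquely determined by the syndromes Ŝᵢ = y(βⁱ), i = 0, ..., f-1, via the Forney formula Yᵢ = Ω̂(Xᵢ⁻¹)/Λ̂_odd(Xᵢ⁻¹), where Λ̂(x) = ∏ⱼ(1 - Xⱼx) and Ω̂(x) = Λ̂(x)Ŝ(x) mod x^f. -/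
/-!
Write `Λ̂ = (1 - Xⱼ x) Pⱼ` with `Pⱼ = ∏_{k ≠ j} (1 - Xₖ x)`. Since `Ŝ = Σⱼ Yⱼ Σ_{n<f} (Xⱼ x)ⁿ`, the
geometric sum gives `Λ̂ Ŝ ≡ Σⱼ Yⱼ Pⱼ (mod x^f)`, and the right side has degree `< e ≤ f`, so it
is `Ω̂`. At `x = Xᵢ⁻¹` every `Pⱼ` with `j ≠ i` vanishes, so `Ω̂(Xᵢ⁻¹) = Yᵢ Pᵢ(Xᵢ⁻¹)`. In
characteristic 2 the odd part of a polynomial `p` is `x p'(x)`, and the product rule gives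
`Xᵢ⁻¹ Λ̂'(Xᵢ⁻¹) = -Pᵢ(Xᵢ⁻¹) = Pᵢ(Xᵢ⁻¹)`, which is nonzero because the locators are distinct.
-/

open Polynomial Finset

namespace Polynomial

theorem sum_odd_monomial_eq_X_mul_derivative {R : Type*} [Semiring R] [CharP R 2] (p : R[X]) :
    (∑ k ∈ range (p.natDegree + 1), if Odd k then monomial k (p.coeff k) else 0) =
      X * derivative p := by
  have hmonomial (k : ℕ) : (if Odd k then monomial k (p.coeff k) else 0) =
      monomial k (if Odd k then p.coeff k else 0) := by
    split_ifs <;> simp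
  ext n
  simp only [hmonomial, finsetSum_coeff, coeff_monomial, sum_ite_eq', mem_range]
  rcases n with _ | m
  · simp
  · rw [coeff_X_mul, coeff_derivative, ← Nat.cast_succ, CharTwo.natCast_eq_ite]
    by_cases hm : m + 1 < p.natDegree + 1
    · split_ifs <;> simp_all [← Nat.not_odd_iff_even]
    · simp [hm, coeff_eq_zero_of_natDegree_lt (by omega : p.natDegree < m + 1)]

end Polynomial

namespace ReedSolomon

variable {F ι : Type*} [Field F]

noncomputable def erasureLocator (a : ι → F) (s : Finset ι) : F[X] :=
  ∏ k ∈ s, (1 - C (a k) * X)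

theorem natDegree_erasureLocator_le (a : ι → F) (s : Finset ι) :
    (erasureLocator a s).natDegree ≤ #s := by
  calc (erasureLocator a s).natDegree ≤ ∑ k ∈ s, (1 - C (a k) * X : F[X]).natDegree :=
        natDegree_prod_le _ _
    _ ≤ ∑ _k ∈ s, 1 := sum_le_sum fun k _ => by compute_degree
    _ = #s := (card_eq_sum_ones s).symm

variable {a : ι → F} {i : ι}

theorem eval_erasureLocator_inv_of_mem {s : Finset ι} (hi : i ∈ s) (hai : a i ≠ 0) :
    (erasureLocator a s).eval (a i)⁻¹ = 0 :=
  (eval_prod _ _ _).trans <| prod_eq_zero hi <| by simp [hai]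

theorem eval_erasureLocator_inv_ne_zero {s : Finset ι} (ha : Function.Injective a)
    (hai : a i ≠ 0) (hi : i ∉ s) : (erasureLocator a s).eval (a i)⁻¹ ≠ 0 := by
  rw [erasureLocator, eval_prod, prod_ne_zero_iff]
  intro k hk
  simp only [eval_sub, eval_one, eval_mul, eval_C, eval_X, sub_ne_zero, ne_comm (a := (1 : F)),
    Ne, mul_inv_eq_one₀ hai, ha.eq_iff]
  rintro rfl
  exact hi hk

variable [Fintype ι] [DecidableEq ι]

noncomputable def syndromePoly (a b : ι → F) (f : ℕ) : F[X] :=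
  ∑ n ∈ range f, C (∑ j, b j * a j ^ n) * X ^ n

noncomputable def erasureEvaluator (a b : ι → F) : F[X] :=
  ∑ j, C (b j) * erasureLocator a (univ.erase j)

theorem erasureLocator_mul_syndromePoly (a b : ι → F) (f : ℕ) :
    erasureLocator a univ * syndromePoly a b f = erasureEvaluator a b -
      X ^ f * ∑ j, C (b j * a j ^ f) * erasureLocator a (univ.erase j) := by
  have hsyndrome : syndromePoly a b f = ∑ j, C (b j) * ∑ n ∈ range f, (C (a j) * X) ^ n := by
    simp only [syndromePoly, map_sum, sum_mul, mul_sum, map_mul, map_pow, mul_pow, mul_assoc]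
    exact sum_comm
  rw [hsyndrome, erasureEvaluator, mul_sum, mul_sum, ← sum_sub_distrib]
  refine sum_congr rfl fun j _ => ?_
  rw [erasureLocator, ← mul_prod_erase univ _ (mem_univ j), ← erasureLocator, map_mul, map_pow]
  linear_combination C (b j) * erasureLocator a (univ.erase j) * mul_neg_geom_sum (C (a j) * X) f

theorem degree_erasureEvaluator_lt {f : ℕ} (h : Fintype.card ι ≤ f) (a b : ι → F) :
    (erasureEvaluator a b).degree < f := by
  rw [← mem_degreeLT, erasureEvaluator]
  refine Submodule.sum_mem _ fun j _ => ?_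
  rw [← smul_eq_C_mul]
  refine Submodule.smul_mem _ _ (mem_degreeLT.2 (degree_le_natDegree.trans_lt ?_))
  have hdeg := natDegree_erasureLocator_le a (univ.erase j)
  rw [card_erase_of_mem (mem_univ j), card_univ] at hdeg
  have hcard : 0 < Fintype.card ι := Fintype.card_pos_iff.2 ⟨j⟩
  exact_mod_cast (by omega : _ < f)

theorem erasureLocator_mul_syndromePoly_mod {f : ℕ} (h : Fintype.card ι ≤ f) (a b : ι → F) :
    erasureLocator a univ * syndromePoly a b f % X ^ f = erasureEvaluator a b := by
  rw [← modByMonic_eq_mod _ (monic_X_pow f)]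
  refine (div_modByMonic_unique (-∑ j, C (b j * a j ^ f) * erasureLocator a (univ.erase j)) _
    (monic_X_pow f) ⟨?_, ?_⟩).2
  · rw [erasureLocator_mul_syndromePoly]
    ring
  · rw [degree_X_pow]
    exact degree_erasureEvaluator_lt h a b

theorem eval_erasureEvaluator_inv (hai : a i ≠ 0) (b : ι → F) :
    (erasureEvaluator a b).eval (a i)⁻¹ =
      b i * (erasureLocator a (univ.erase i)).eval (a i)⁻¹ := by
  rw [erasureEvaluator, eval_finsetSum, sum_eq_single i]
  · rw [eval_mul, eval_C]
  · intro j _ hji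
    rw [eval_mul, eval_erasureLocator_inv_of_mem (mem_erase.2 ⟨Ne.symm hji, mem_univ i⟩) hai,
      mul_zero]
  · simp

theorem inv_mul_eval_derivative_erasureLocator_inv (hai : a i ≠ 0) :
    (a i)⁻¹ * (derivative (erasureLocator a univ)).eval (a i)⁻¹ =
      -(erasureLocator a (univ.erase i)).eval (a i)⁻¹ := by
  rw [erasureLocator, derivative_prod_finset, eval_finsetSum, sum_eq_single i]
  · rw [← erasureLocator, eval_mul, derivative_sub, derivative_one, derivative_C_mul_X, eval_sub,
      eval_zero, eval_C, zero_sub, mul_neg, mul_comm _ (a i), mul_neg, inv_mul_cancel_left₀ hai]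
  · intro j _ hji
    rw [eval_mul, ← erasureLocator,
      eval_erasureLocator_inv_of_mem (mem_erase.2 ⟨Ne.symm hji, mem_univ i⟩) hai, zero_mul]
  · simp

end ReedSolomon

open ReedSolomon

open Polynomial Finset in
/-- Reed–Solomon erasure-only decoding via the Forney formula: with generator roots
`1, β, …, β^{f-1}`, `e ≤ f` erasures at known distinct nonzero locators `Xᵢ` and
values `Yᵢ`, syndromes `Ŝᵢ = Σⱼ Yⱼ Xⱼⁱ`, erasure locator polynomial
`Λ̂(x) = ∏ⱼ (1 - Xⱼ x)`, and erasure evaluator `Ω̂(x) = Λ̂(x) Ŝ(x) mod x^f`, each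
erasure value is recovered as `Yᵢ = Ω̂(Xᵢ⁻¹) / Λ̂_odd(Xᵢ⁻¹)`, where `Λ̂_odd` is the
sum of odd-degree terms of `Λ̂` (binary-extension field, characteristic 2). -/
theorem stmt13 (F : Type*) [Field F] [CharP F 2] (f e : ℕ) (hef : e ≤ f)
    (X : Fin e → F) (hXinj : Function.Injective X) (hX0 : ∀ j, X j ≠ 0)
    (Y : Fin e → F)
    (Shat : Polynomial F)
    (hShat : Shat = ∑ i ∈ Finset.range f, C (∑ j, Y j * X j ^ i) * Polynomial.X ^ i)
    (Λhat : Polynomial F) (hΛ : Λhat = ∏ j, (1 - C (X j) * Polynomial.X))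
    (Ωhat : Polynomial F) (hΩ : Ωhat = (Λhat * Shat) % Polynomial.X ^ f)
    (Λodd : Polynomial F)
    (hΛodd : Λodd = ∑ k ∈ Finset.range (Λhat.natDegree + 1),
      if Odd k then Polynomial.monomial k (Λhat.coeff k) else 0) :
    ∀ i, Y i = Ωhat.eval (X i)⁻¹ / Λodd.eval (X i)⁻¹ := by
  intro i
  have hΛ' : Λhat = erasureLocator X univ := hΛ
  have hΩ' : Ωhat = erasureEvaluator X Y := by
    rw [hΩ, hΛ', hShat]
    exact erasureLocator_mul_syndromePoly_mod (by simpa using hef) X Y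
  have hΛodd' : Λodd.eval (X i)⁻¹ = (erasureLocator X (univ.erase i)).eval (X i)⁻¹ := by
    rw [hΛodd, sum_odd_monomial_eq_X_mul_derivative, eval_mul, eval_X, hΛ',
      inv_mul_eval_derivative_erasureLocator_inv (hX0 i), CharTwo.neg_eq]
  rw [hΩ', eval_erasureEvaluator_inv (hX0 i), hΛodd', mul_div_cancel_right₀ _
    (eval_erasureLocator_inv_ne_zero hXinj (hX0 i) (notMem_erase i univ))]
end
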